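/- arXiv:2412.07685 — 6 statements merged into one kernel-verified Lean document; each statement's English description precedes it below -/
import Mathlib

section
/- Let G be a finite simple graph, let I be a maximum independent set of G, let A ⊆ V(G), and set T = I ∩ A. Then α(G) = α(G[V(G) ∖ (A ∪ N(T))]) + |T|. -/
/-- A finset of vertices is an independent set of `G`: no two of its vertices are adjacent. -/
def IsIndepSet {V : Type*} (G : SimpleGraph V) (s : Finset V) : Prop :=
  ∀ v ∈ s, ∀ w ∈ s, ¬ G.Adj v w

-- `alphaOn G A` is the independence number of the induced subgraph `G[A]`,
-- i.e. the maximum size of an independent set of `G` contained in `A`.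
open Classical in
noncomputable def alphaOn {V : Type*} (G : SimpleGraph V) (A : Finset V) : ℕ :=
  (A.powerset.filter (fun s => IsIndepSet G s)).sup Finset.card

/-- `alpha G` is the independence number of `G`. -/
noncomputable def alpha {V : Type*} [Fintype V] (G : SimpleGraph V) : ℕ :=
  alphaOn G Finset.univ

-- `nbrFinset G T = (⋃ v ∈ T, N(v)) \ T`, the (open) neighborhood of a vertex set `T`.
open Classical in
noncomputable def nbrFinset {V : Type*} [Fintype V] (G : SimpleGraph V) (T : Finset V) : Finset V :=
  (Finset.univ.filter (fun v => ∃ u ∈ T, G.Adj u v)) \ T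

-- `boundary G R` is the set of vertices of `R` having a neighbor outside `R`.
open Classical in
noncomputable def boundary {V : Type*} [Fintype V] (G : SimpleGraph V) (R : Finset V) : Finset V :=
  R.filter (fun v => ∃ u, u ∉ R ∧ G.Adj v u)

-- `alphaRestricted G R S` is the maximum size of an independent set `J` of the induced
-- subgraph `G[R]` satisfying `J ∩ ∂R = S`.
open Classical in
noncomputable def alphaRestricted {V : Type*} [Fintype V] (G : SimpleGraph V) (R S : Finset V) : ℕ :=
  (R.powerset.filter (fun J => IsIndepSet G J ∧ J ∩ boundary G R = S)).sup Finset.card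

-- `maxIndepWithBoundary G R S` is the maximum size of an independent set `I` of `G`
-- satisfying `I ∩ ∂R = S`.
open Classical in
noncomputable def maxIndepWithBoundary {V : Type*} [Fintype V] (G : SimpleGraph V) (R S : Finset V) : ℕ :=
  (Finset.univ.powerset.filter (fun I => IsIndepSet G I ∧ I ∩ boundary G R = S)).sup Finset.card

/-
Removing `T = I ∩ A` from a maximum independent set `I` leaves an independent set avoiding
`A ∪ N(T)`, which gives `α(G) ≤ α(G[V ∖ (A ∪ N(T))]) + |T|`. Conversely, any independent set of
`G[V ∖ (A ∪ N(T))]` is disjoint from `T ⊆ A` and has no edge to `T`, so adding `T` to it keeps it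
independent, which gives the reverse inequality.
-/

section

variable {V : Type*} (G : SimpleGraph V)

theorem IsIndepSet.mono {s t : Finset V} (ht : IsIndepSet G t) (hst : s ⊆ t) :
    IsIndepSet G s :=
  fun v hv w hw => ht v (hst hv) w (hst hw)

theorem IsIndepSet.union [DecidableEq V] {s t : Finset V} (hs : IsIndepSet G s)
    (ht : IsIndepSet G t) (hst : ∀ v ∈ s, ∀ w ∈ t, ¬ G.Adj v w) :
    IsIndepSet G (s ∪ t) := by
  intro v hv w hw hadj
  rcases Finset.mem_union.mp hv with hvs | hvt <;> rcases Finset.mem_union.mp hw with hws | hwt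
  · exact hs v hvs w hws hadj
  · exact hst v hvs w hwt hadj
  · exact hst w hws v hvt hadj.symm
  · exact ht v hvt w hwt hadj

theorem card_le_alphaOn {A s : Finset V} (hs : s ⊆ A) (hind : IsIndepSet G s) :
    s.card ≤ alphaOn G A := by
  classical
  exact Finset.le_sup (Finset.mem_filter.mpr ⟨Finset.mem_powerset.mpr hs, hind⟩)

theorem exists_isIndepSet_card_eq_alphaOn (A : Finset V) :
    ∃ s ⊆ A, IsIndepSet G s ∧ s.card = alphaOn G A := by
  classical
  obtain ⟨s, hs, h⟩ := Finset.exists_mem_eq_sup (A.powerset.filter (IsIndepSet G))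
    ⟨∅, Finset.mem_filter.mpr ⟨Finset.empty_mem_powerset _, by simp [IsIndepSet]⟩⟩ Finset.card
  rw [Finset.mem_filter, Finset.mem_powerset] at hs
  exact ⟨s, hs.1, hs.2, h.symm⟩

variable [Fintype V]

theorem mem_nbrFinset {T : Finset V} {v : V} :
    v ∈ nbrFinset G T ↔ (∃ u ∈ T, G.Adj u v) ∧ v ∉ T := by
  classical
  simp [nbrFinset]

theorem IsIndepSet.disjoint_nbrFinset {I T : Finset V} (hI : IsIndepSet G I) (hTI : T ⊆ I) :
    Disjoint I (nbrFinset G T) :=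
  Finset.disjoint_left.mpr fun v hvI hvN =>
    let ⟨⟨u, huT, hadj⟩, _⟩ := (mem_nbrFinset G).mp hvN
    hI u (hTI huT) v hvI hadj

theorem alpha_le_alphaOn_add_card [DecidableEq V] {I : Finset V} (hI : IsIndepSet G I)
    (hImax : I.card = alpha G) (A : Finset V) :
    alpha G ≤ alphaOn G (Finset.univ \ (A ∪ nbrFinset G (I ∩ A))) + (I ∩ A).card := by
  have hsub : I \ (I ∩ A) ⊆ Finset.univ \ (A ∪ nbrFinset G (I ∩ A)) := by
    intro v hv
    obtain ⟨hvI, hvT⟩ := Finset.mem_sdiff.mp hv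
    have hvN : v ∉ nbrFinset G (I ∩ A) :=
      Finset.disjoint_left.mp (hI.disjoint_nbrFinset G Finset.inter_subset_left) hvI
    simp only [Finset.mem_sdiff, Finset.mem_univ, Finset.mem_union, true_and, not_or]
    exact ⟨fun hvA => hvT (Finset.mem_inter.mpr ⟨hvI, hvA⟩), hvN⟩
  have hle := card_le_alphaOn G hsub (hI.mono G Finset.sdiff_subset)
  have hsplit := Finset.card_sdiff_add_card_eq_card (Finset.inter_subset_left (s₁ := I) (s₂ := A))
  omega

theorem alphaOn_add_card_le_alpha [DecidableEq V] {T A : Finset V} (hT : IsIndepSet G T)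
    (hTA : T ⊆ A) :
    alphaOn G (Finset.univ \ (A ∪ nbrFinset G T)) + T.card ≤ alpha G := by
  obtain ⟨J, hJsub, hJ, hJcard⟩ :=
    exists_isIndepSet_card_eq_alphaOn G (Finset.univ \ (A ∪ nbrFinset G T))
  have hJ_avoid : ∀ v ∈ J, v ∉ A ∧ v ∉ nbrFinset G T := fun v hv => by
    simpa using hJsub hv
  have hdisj : Disjoint J T :=
    Finset.disjoint_left.mpr fun v hvJ hvT => (hJ_avoid v hvJ).1 (hTA hvT)
  have hcross : ∀ v ∈ J, ∀ w ∈ T, ¬ G.Adj v w := fun v hvJ w hwT hadj =>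
    (hJ_avoid v hvJ).2 ((mem_nbrFinset G).mpr
      ⟨⟨w, hwT, hadj.symm⟩, Finset.disjoint_left.mp hdisj hvJ⟩)
  rw [← hJcard, ← Finset.card_union_of_disjoint hdisj]
  exact card_le_alphaOn G (Finset.subset_univ _) (hJ.union G hT hcross)

end

/-- Let `I` be a maximum independent set of `G`, `A ⊆ V(G)`, `T = I ∩ A`.
Then `α(G) = α(G[V(G) ∖ (A ∪ N(T))]) + |T|`. -/
theorem stmt_1 {V : Type*} [Fintype V] [DecidableEq V] (G : SimpleGraph V)
    (I : Finset V) (hI : IsIndepSet G I) (hImax : I.card = alpha G)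
    (A : Finset V) :
    alpha G = alphaOn G (Finset.univ \ (A ∪ nbrFinset G (I ∩ A))) + (I ∩ A).card :=
  le_antisymm (alpha_le_alphaOn_add_card G hI hImax A)
    (alphaOn_add_card_le_alpha G (hI.mono G Finset.inter_subset_left) Finset.inter_subset_right)
end

section
/- Branching over boundary configurations: let G be a finite simple graph and R ⊆ V(G). Then α(G) = max over all independent sets S ⊆ ∂R of G of the quantity ( max{ |J| : J is an independent set of G[R] with J ∩ ∂R = S } + α(G[V(G) ∖ (R ∪ N(S))]) ). -/
open Classical

lemma le_alphaOn {V : Type*} [Fintype V] (G : SimpleGraph V) (A I : Finset V)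
    (hIA : I ⊆ A) (h : IsIndepSet G I) : I.card ≤ alphaOn G A := by
  unfold alphaOn
  exact Finset.le_sup (Finset.mem_filter.mpr ⟨Finset.mem_powerset.mpr hIA, h⟩)

lemma alphaOn_exists {V : Type*} [Fintype V] (G : SimpleGraph V) (A : Finset V) :
    ∃ I, I ⊆ A ∧ IsIndepSet G I ∧ I.card = alphaOn G A := by
  unfold alphaOn
  have hne : (A.powerset.filter (fun s => IsIndepSet G s)).Nonempty :=
    ⟨∅, Finset.mem_filter.mpr ⟨Finset.mem_powerset.mpr (Finset.empty_subset A),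
      fun v hv => absurd hv (Finset.notMem_empty v)⟩⟩
  obtain ⟨I, hmem, heq⟩ := Finset.exists_mem_eq_sup _ hne Finset.card
  obtain ⟨h1, h2⟩ := Finset.mem_filter.mp hmem
  exact ⟨I, Finset.mem_powerset.mp h1, h2, heq.symm⟩

lemma le_alphaRestricted {V : Type*} [Fintype V] (G : SimpleGraph V) (R S J : Finset V)
    (hJR : J ⊆ R) (hJi : IsIndepSet G J) (hJS : J ∩ boundary G R = S) :
    J.card ≤ alphaRestricted G R S := by
  unfold alphaRestricted
  exact Finset.le_sup (Finset.mem_filter.mpr ⟨Finset.mem_powerset.mpr hJR, hJi, hJS⟩)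

lemma alphaRestricted_exists {V : Type*} [Fintype V] (G : SimpleGraph V) (R S : Finset V)
    (hS : S ⊆ boundary G R) (hSi : IsIndepSet G S) :
    ∃ J, J ⊆ R ∧ IsIndepSet G J ∧ J ∩ boundary G R = S ∧ J.card = alphaRestricted G R S := by
  unfold alphaRestricted
  have hbR : boundary G R ⊆ R := Finset.filter_subset _ _
  have hne : (R.powerset.filter (fun J => IsIndepSet G J ∧ J ∩ boundary G R = S)).Nonempty :=
    ⟨S, Finset.mem_filter.mpr ⟨Finset.mem_powerset.mpr (hS.trans hbR), hSi,
      Finset.inter_eq_left.mpr hS⟩⟩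
  obtain ⟨J, hmem, heq⟩ := Finset.exists_mem_eq_sup _ hne Finset.card
  obtain ⟨h1, h2, h3⟩ := Finset.mem_filter.mp hmem
  exact ⟨J, Finset.mem_powerset.mp h1, h2, h3, heq.symm⟩

lemma mem_boundary_iff {V : Type*} [Fintype V] (G : SimpleGraph V) (R : Finset V) (v : V) :
    v ∈ boundary G R ↔ v ∈ R ∧ ∃ u, u ∉ R ∧ G.Adj v u := by
  unfold boundary
  rw [Finset.mem_filter]

lemma mem_nbrFinset_iff {V : Type*} [Fintype V] (G : SimpleGraph V) (S : Finset V) (v : V) :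
    v ∈ nbrFinset G S ↔ (∃ u ∈ S, G.Adj u v) ∧ v ∉ S := by
  unfold nbrFinset
  rw [Finset.mem_sdiff, Finset.mem_filter]
  simp only [Finset.mem_univ, true_and]

/-- branching over boundary configurations:
`α(G) = max over independent S ⊆ ∂R of
  (max{|J| : J indep in G[R], J ∩ ∂R = S} + α(G[V(G) ∖ (R ∪ N(S))]))`. -/
theorem stmt_8 {V : Type*} [Fintype V] [DecidableEq V] (G : SimpleGraph V)
    (R : Finset V) :
    alpha G = ((boundary G R).powerset.filter (fun S => IsIndepSet G S)).sup
      (fun S => alphaRestricted G R S + alphaOn G (Finset.univ \ (R ∪ nbrFinset G S))) := by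
  have hbR : boundary G R ⊆ R := fun v hv => ((mem_boundary_iff G R v).mp hv).1
  apply le_antisymm
  · -- α(G) ≤ sup
    obtain ⟨I, -, hIindep, hIcard⟩ := alphaOn_exists G (Finset.univ : Finset V)
    set S : Finset V := I ∩ boundary G R with hSdef
    have hSsub : S ⊆ boundary G R := Finset.inter_subset_right
    have hSindep : IsIndepSet G S := fun v hv w hw =>
      hIindep v (Finset.mem_of_mem_inter_left hv) w (Finset.mem_of_mem_inter_left hw)
    have hSmem : S ∈ (boundary G R).powerset.filter (fun S => IsIndepSet G S) :=
      Finset.mem_filter.mpr ⟨Finset.mem_powerset.mpr hSsub, hSindep⟩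
    have h1 : (I ∩ R).card ≤ alphaRestricted G R S := by
      apply le_alphaRestricted G R S _ Finset.inter_subset_right
        (fun v hv w hw => hIindep v (Finset.mem_of_mem_inter_left hv) w
          (Finset.mem_of_mem_inter_left hw))
      ext v
      simp only [Finset.mem_inter, hSdef]
      constructor
      · rintro ⟨⟨hvI, -⟩, hvb⟩; exact ⟨hvI, hvb⟩
      · rintro ⟨hvI, hvb⟩; exact ⟨⟨hvI, hbR hvb⟩, hvb⟩
    have h2 : (I \ R).card ≤ alphaOn G (Finset.univ \ (R ∪ nbrFinset G S)) := by
      apply le_alphaOn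
      · intro v hv
        rw [Finset.mem_sdiff] at hv
        rw [Finset.mem_sdiff, Finset.mem_union]
        refine ⟨Finset.mem_univ v, ?_⟩
        rintro (hvR | hvN)
        · exact hv.2 hvR
        · obtain ⟨⟨u, huS, hadj⟩, -⟩ := (mem_nbrFinset_iff G S v).mp hvN
          exact hIindep u (Finset.mem_of_mem_inter_left huS) v hv.1 hadj
      · exact fun v hv w hw => hIindep v (Finset.mem_sdiff.mp hv).1 w (Finset.mem_sdiff.mp hw).1
    calc alpha G = I.card := hIcard.symm
      _ = (I ∩ R).card + (I \ R).card := (Finset.card_inter_add_card_sdiff I R).symm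
      _ ≤ alphaRestricted G R S + alphaOn G (Finset.univ \ (R ∪ nbrFinset G S)) :=
          Nat.add_le_add h1 h2
      _ ≤ _ := Finset.le_sup
          (f := fun S => alphaRestricted G R S + alphaOn G (Finset.univ \ (R ∪ nbrFinset G S)))
          hSmem
  · -- sup ≤ α(G)
    apply Finset.sup_le
    intro S hSmem
    obtain ⟨hSsub', hSindep⟩ := Finset.mem_filter.mp hSmem
    have hSsub : S ⊆ boundary G R := Finset.mem_powerset.mp hSsub'
    obtain ⟨J, hJR, hJindep, hJS, hJcard⟩ := alphaRestricted_exists G R S hSsub hSindep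
    obtain ⟨K, hKA, hKindep, hKcard⟩ := alphaOn_exists G (Finset.univ \ (R ∪ nbrFinset G S))
    have hKR : ∀ v ∈ K, v ∉ R := fun v hv hvR =>
      (Finset.mem_sdiff.mp (hKA hv)).2 (Finset.mem_union.mpr (Or.inl hvR))
    have hKN : ∀ v ∈ K, v ∉ nbrFinset G S := fun v hv hvN =>
      (Finset.mem_sdiff.mp (hKA hv)).2 (Finset.mem_union.mpr (Or.inr hvN))
    have hcross : ∀ v ∈ J, ∀ w ∈ K, ¬ G.Adj v w := by
      intro v hv w hw hadj
      have hwR : w ∉ R := hKR w hw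
      have hvb : v ∈ boundary G R := (mem_boundary_iff G R v).mpr ⟨hJR hv, w, hwR, hadj⟩
      have hvS : v ∈ S := by
        rw [← hJS]; simp only [Finset.mem_inter]; exact ⟨hv, hvb⟩
      have hwS : w ∉ S := fun h => hwR (hbR (hSsub h))
      exact hKN w hw ((mem_nbrFinset_iff G S w).mpr ⟨⟨v, hvS, hadj⟩, hwS⟩)
    have hdisj : Disjoint J K := Finset.disjoint_left.mpr
      (fun {v} hvJ hvK => hKR v hvK (hJR hvJ))
    have hunion : IsIndepSet G (J ∪ K) := by
      intro v hv w hw hadj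
      rw [Finset.mem_union] at hv hw
      rcases hv with hv | hv <;> rcases hw with hw | hw
      · exact hJindep v hv w hw hadj
      · exact hcross v hv w hw hadj
      · exact hcross w hw v hv hadj.symm
      · exact hKindep v hv w hw hadj
    calc alphaRestricted G R S + alphaOn G (Finset.univ \ (R ∪ nbrFinset G S))
        = J.card + K.card := by rw [hJcard, hKcard]
      _ = (J ∪ K).card := (Finset.card_union_of_disjoint hdisj).symm
      _ ≤ alpha G := le_alphaOn G Finset.univ (J ∪ K) (Finset.subset_univ _) hunion
end

section
/- Pruning by less restrictive boundary configurations: let G be a finite simple graph, R ⊆ V(G), and let s ⊆ t ⊆ ∂R with t an independent set of G. Define α_R(x) = max{ |J| : J is an independent set of G[R] with J ∩ ∂R = x }. If α_R(s) ≥ α_R(t), then for every independent set I of G with I ∩ ∂R = t there exists an independent set I′ of G with I′ ∩ ∂R = s and |I′| ≥ |I|; in particular max{ |I| : I independent in G, I ∩ ∂R = t } ≤ max{ |I| : I independent in G, I ∩ ∂R = s }. -/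
/-- pruning by less restrictive boundary configurations: if `s ⊆ t ⊆ ∂R`,
`t` independent, and `α_R(s) ≥ α_R(t)`, then every independent set `I` of `G` with
`I ∩ ∂R = t` admits an independent set `I'` with `I' ∩ ∂R = s` and `|I'| ≥ |I|`;
in particular the corresponding maxima compare. -/
theorem stmt_9 {V : Type*} [Fintype V] [DecidableEq V] (G : SimpleGraph V)
    (R s t : Finset V) (hst : s ⊆ t) (htR : t ⊆ boundary G R)
    (ht : IsIndepSet G t)
    (halpha : alphaRestricted G R t ≤ alphaRestricted G R s) :
    (∀ I : Finset V, IsIndepSet G I → I ∩ boundary G R = t →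
      ∃ I' : Finset V, IsIndepSet G I' ∧ I' ∩ boundary G R = s ∧ I.card ≤ I'.card) ∧
    maxIndepWithBoundary G R t ≤ maxIndepWithBoundary G R s := by
  classical
  have hbdry : boundary G R = R.filter (fun v => ∃ u, u ∉ R ∧ G.Adj v u) := by
    unfold boundary; congr!
  have halphaR : ∀ S : Finset V, alphaRestricted G R S =
      (R.powerset.filter (fun J => IsIndepSet G J ∧ J ∩ boundary G R = S)).sup
        Finset.card := by
    intro S; unfold alphaRestricted; congr!
  have hmaxR : ∀ S : Finset V, maxIndepWithBoundary G R S =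
      (Finset.univ.powerset.filter
        (fun I => IsIndepSet G I ∧ I ∩ boundary G R = S)).sup Finset.card := by
    intro S; unfold maxIndepWithBoundary; congr!
  have hbR : boundary G R ⊆ R := by rw [hbdry]; exact Finset.filter_subset _ _
  obtain ⟨J, hJR, hJind, hJbd, hJcard⟩ :
      ∃ J : Finset V, J ⊆ R ∧ IsIndepSet G J ∧ J ∩ boundary G R = s ∧
        alphaRestricted G R s = J.card := by
    rw [halphaR]
    have hsmem : s ∈ R.powerset.filter
        (fun J => IsIndepSet G J ∧ J ∩ boundary G R = s) := by
      simp only [Finset.mem_filter, Finset.mem_powerset]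
      exact ⟨(hst.trans htR).trans hbR,
        fun v hv w hw => ht v (hst hv) w (hst hw),
        Finset.inter_eq_left.mpr (hst.trans htR)⟩
    obtain ⟨J, hJmem, hc⟩ := Finset.exists_mem_eq_sup _ ⟨s, hsmem⟩ Finset.card
    simp only [Finset.mem_filter, Finset.mem_powerset] at hJmem
    exact ⟨J, hJmem.1, hJmem.2.1, hJmem.2.2, hc⟩
  have main : ∀ I : Finset V, IsIndepSet G I → I ∩ boundary G R = t →
      ∃ I' : Finset V, IsIndepSet G I' ∧ I' ∩ boundary G R = s ∧ I.card ≤ I'.card := by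
    intro I hI hIbd
    have key : ∀ v ∈ I \ R, ∀ w ∈ J, ¬ G.Adj v w := by
      intro v hv w hw hadj
      rw [Finset.mem_sdiff] at hv
      have hwB : w ∈ boundary G R := by
        rw [hbdry, Finset.mem_filter]
        exact ⟨hJR hw, v, hv.2, hadj.symm⟩
      have hws : w ∈ s := by rw [← hJbd]; exact Finset.mem_inter.mpr ⟨hw, hwB⟩
      have hwI : w ∈ I := by
        have : w ∈ I ∩ boundary G R := by rw [hIbd]; exact hst hws
        exact (Finset.mem_inter.mp this).1
      exact hI v hv.1 w hwI hadj
    refine ⟨(I \ R) ∪ J, ?_, ?_, ?_⟩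
    · intro v hv w hw
      rw [Finset.mem_union] at hv hw
      rcases hv with hv | hv <;> rcases hw with hw | hw
      · exact hI v (Finset.mem_sdiff.mp hv).1 w (Finset.mem_sdiff.mp hw).1
      · exact key v hv w hw
      · intro h; exact key w hw v hv h.symm
      · exact hJind v hv w hw
    · have h1 : (I \ R) ∩ boundary G R = ∅ := by
        rw [Finset.eq_empty_iff_forall_notMem]
        intro x hx
        rw [Finset.mem_inter, Finset.mem_sdiff] at hx
        exact hx.1.2 (hbR hx.2)
      rw [Finset.union_inter_distrib_right, h1, hJbd, Finset.empty_union]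
    · have hdisj : Disjoint (I \ R) J := by
        rw [Finset.disjoint_left]
        intro a ha haJ
        exact (Finset.mem_sdiff.mp ha).2 (hJR haJ)
      rw [Finset.card_union_of_disjoint hdisj]
      have hIR : (I ∩ R).card ≤ alphaRestricted G R t := by
        rw [halphaR]
        apply Finset.le_sup
        simp only [Finset.mem_filter, Finset.mem_powerset]
        refine ⟨Finset.inter_subset_right, fun v hv w hw =>
          hI v (Finset.mem_inter.mp hv).1 w (Finset.mem_inter.mp hw).1, ?_⟩
        rw [Finset.inter_assoc, Finset.inter_eq_right.mpr hbR, hIbd]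
      have hsplit : (I ∩ R).card + (I \ R).card = I.card :=
        Finset.card_inter_add_card_sdiff I R
      have : (I ∩ R).card ≤ J.card := by
        calc (I ∩ R).card ≤ alphaRestricted G R t := hIR
          _ ≤ alphaRestricted G R s := halpha
          _ = J.card := hJcard
      omega
  refine ⟨main, ?_⟩
  rw [hmaxR, hmaxR]
  apply Finset.sup_le
  intro I hImem
  simp only [Finset.mem_filter, Finset.mem_powerset] at hImem
  obtain ⟨-, hIind, hIbd⟩ := hImem
  obtain ⟨I', hI'ind, hI'bd, hle⟩ := main I hIind hIbd
  calc I.card ≤ I'.card := hle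
    _ ≤ _ := by
        apply Finset.le_sup
        simp only [Finset.mem_filter, Finset.mem_powerset]
        exact ⟨Finset.subset_univ _, hI'ind, hI'bd⟩
end

section
/- The minimum branching complexity is the unique fixed point (characterization part): let ι be a finite index set, ρ : ι → ℝ with ρ(i) > 0 for all i, and let F be a nonempty finite family of subsets of ι, each of cardinality at least 2. For x ∈ F let r(x) denote the unique γ > 1 with ∑_{i∈x} γ^{-ρ(i)} = 1, and set γ₀ = min_{x∈F} r(x). Then (i) for every x ∈ F, ∑_{i∈x} γ₀^{-ρ(i)} ≥ 1, and (ii) every x* ∈ F minimizing x ↦ ∑_{i∈x} γ₀^{-ρ(i)} over F satisfies r(x*) = γ₀. -/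
/-- the minimum branching complexity is the unique fixed point
(characterization part): with `ρ i > 0`, `F` a nonempty finite family of subsets of the
finite index set `ι` each of cardinality `≥ 2`, `r x` the unique `γ > 1` solving
`∑ i ∈ x, γ ^ (-ρ i) = 1`, and `γ₀ = min_{x ∈ F} r x`, we have
(i) `∑ i ∈ x, γ₀ ^ (-ρ i) ≥ 1` for every `x ∈ F`, and
(ii) every minimizer `x*` of `x ↦ ∑ i ∈ x, γ₀ ^ (-ρ i)` over `F` satisfies `r x* = γ₀`. -/
theorem stmt_15 {ι : Type*} [Fintype ι] (ρ : ι → ℝ) (hρ : ∀ i, 0 < ρ i)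
    (F : Finset (Finset ι)) (hF : F.Nonempty) (hcard : ∀ x ∈ F, 2 ≤ x.card)
    (r : Finset ι → ℝ)
    (hr : ∀ x ∈ F, 1 < r x ∧ ∑ i ∈ x, (r x) ^ (-(ρ i)) = 1)
    (γ₀ : ℝ) (hγ₀ : γ₀ = F.inf' hF r) :
    (∀ x ∈ F, 1 ≤ ∑ i ∈ x, γ₀ ^ (-(ρ i))) ∧
    (∀ xstar ∈ F,
      (∀ x ∈ F, ∑ i ∈ xstar, γ₀ ^ (-(ρ i)) ≤ ∑ i ∈ x, γ₀ ^ (-(ρ i))) →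
      r xstar = γ₀) := by
  obtain ⟨x₀, hx₀, hx₀r⟩ := F.exists_mem_eq_inf' hF r
  have hγ1 : 1 < γ₀ := by rw [hγ₀, hx₀r]; exact (hr x₀ hx₀).1
  have hγle : ∀ x ∈ F, γ₀ ≤ r x := fun x hx => hγ₀ ▸ Finset.inf'_le r hx
  have part1 : ∀ x ∈ F, 1 ≤ ∑ i ∈ x, γ₀ ^ (-(ρ i)) := by
    intro x hx
    calc 1 = ∑ i ∈ x, (r x) ^ (-(ρ i)) := (hr x hx).2.symm
      _ ≤ ∑ i ∈ x, γ₀ ^ (-(ρ i)) := by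
        refine Finset.sum_le_sum fun i _ => ?_
        exact Real.rpow_le_rpow_of_nonpos (lt_trans one_pos hγ1) (hγle x hx)
          (neg_nonpos.mpr (hρ i).le)
  refine ⟨part1, fun xs hxs hmin => ?_⟩
  have hsum0 : ∑ i ∈ x₀, γ₀ ^ (-(ρ i)) = 1 := by
    rw [hγ₀, hx₀r]; exact (hr x₀ hx₀).2
  have heq : ∑ i ∈ xs, γ₀ ^ (-(ρ i)) = 1 :=
    le_antisymm (hsum0 ▸ hmin x₀ hx₀) (part1 xs hxs)
  by_contra hne
  have hlt : γ₀ < r xs := lt_of_le_of_ne (hγle xs hxs) (Ne.symm hne)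
  have hne' : xs.Nonempty := Finset.card_pos.mp (by have := hcard xs hxs; omega)
  have : ∑ i ∈ xs, (r xs) ^ (-(ρ i)) < ∑ i ∈ xs, γ₀ ^ (-(ρ i)) :=
    Finset.sum_lt_sum_of_nonempty hne' fun i _ =>
      Real.rpow_lt_rpow_of_neg (lt_trans one_pos hγ1) hlt (neg_neg_iff_pos.mpr (hρ i))
  rw [(hr xs hxs).2, heq] at this
  exact lt_irrefl 1 this
end

section
/- Strict decrease of the fixed point iteration above the optimum: let ι be a finite index set, ρ : ι → ℝ with ρ(i) > 0 for all i, and let F be a nonempty finite family of subsets of ι, each of cardinality at least 2. For x ∈ F let r(x) denote the unique γ > 1 with ∑_{i∈x} γ^{-ρ(i)} = 1, and set γ₀ = min_{x∈F} r(x). If γ₁ > γ₀ and x* ∈ F minimizes x ↦ ∑_{i∈x} γ₁^{-ρ(i)} over F, then r(x*) < γ₁. -/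
/-- strict decrease of the fixed point iteration above the optimum: with
`ρ i > 0`, `F` a nonempty finite family of subsets of the finite index set `ι` each of
cardinality `≥ 2`, `r x` the unique `γ > 1` solving `∑ i ∈ x, γ ^ (-ρ i) = 1`, and
`γ₀ = min_{x ∈ F} r x`: if `γ₁ > γ₀` and `x*` minimizes `x ↦ ∑ i ∈ x, γ₁ ^ (-ρ i)`
over `F`, then `r x* < γ₁`. -/
theorem stmt_16 {ι : Type*} [Fintype ι] (ρ : ι → ℝ) (hρ : ∀ i, 0 < ρ i)
    (F : Finset (Finset ι)) (hF : F.Nonempty) (hcard : ∀ x ∈ F, 2 ≤ x.card)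
    (r : Finset ι → ℝ)
    (hr : ∀ x ∈ F, 1 < r x ∧ ∑ i ∈ x, (r x) ^ (-(ρ i)) = 1)
    (γ₀ : ℝ) (hγ₀ : γ₀ = F.inf' hF r)
    (γ₁ : ℝ) (hγ₁ : γ₀ < γ₁)
    (xstar : Finset ι) (hxstar : xstar ∈ F)
    (hmin : ∀ x ∈ F, ∑ i ∈ xstar, γ₁ ^ (-(ρ i)) ≤ ∑ i ∈ x, γ₁ ^ (-(ρ i))) :
    r xstar < γ₁ := by
  obtain ⟨x₀, hx₀F, hx₀⟩ := F.exists_mem_eq_inf' hF r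
  have hx₀r := hr x₀ hx₀F
  have hrx₀ : r x₀ < γ₁ := by rw [← hx₀, ← hγ₀]; exact hγ₁
  have hx₀ne : x₀.Nonempty := Finset.card_pos.mp (by linarith [hcard x₀ hx₀F])
  have hsum : ∑ i ∈ x₀, γ₁ ^ (-(ρ i)) < 1 := by
    calc ∑ i ∈ x₀, γ₁ ^ (-(ρ i)) < ∑ i ∈ x₀, (r x₀) ^ (-(ρ i)) := by
          apply Finset.sum_lt_sum_of_nonempty hx₀ne
          intro i _
          exact Real.rpow_lt_rpow_of_neg (by linarith [hx₀r.1]) hrx₀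
            (neg_neg_of_pos (hρ i))
      _ = 1 := hx₀r.2
  have h1 : ∑ i ∈ xstar, γ₁ ^ (-(ρ i)) < 1 := lt_of_le_of_lt (hmin x₀ hx₀F) hsum
  have hxs := hr xstar hxstar
  by_contra h
  push_neg at h
  have hxsne : xstar.Nonempty := Finset.card_pos.mp (by linarith [hcard xstar hxstar])
  have : (1:ℝ) ≤ ∑ i ∈ xstar, γ₁ ^ (-(ρ i)) := by
    rw [← hxs.2]
    apply Finset.sum_le_sum
    intro i _
    exact Real.rpow_le_rpow_of_nonpos (by linarith [hx₀r.1, hrx₀]) h (neg_nonpos_of_nonneg (hρ i).le)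
  linarith
end

section
/- The automatically discovered branching rule for the bottleneck case improves on the known bound: the unique real number γ > 1 satisfying γ^{-10} + γ^{-16} + 2·γ^{-26} = 1 is strictly less than 1.0836. -/
open Real Set

noncomputable def f18 : ℝ → ℝ := fun x => x ^ (-10 : ℝ) + x ^ (-16 : ℝ) + 2 * x ^ (-26 : ℝ)

lemma f18_eq {x : ℝ} (hx : 0 < x) :
    f18 x = (x ^ (10:ℕ))⁻¹ + (x ^ (16:ℕ))⁻¹ + 2 * (x ^ (26:ℕ))⁻¹ := by
  unfold f18
  rw [show (-10:ℝ) = -(10:ℕ) by norm_num, show (-16:ℝ) = -(16:ℕ) by norm_num,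
    show (-26:ℝ) = -(26:ℕ) by norm_num, Real.rpow_neg hx.le, Real.rpow_neg hx.le,
    Real.rpow_neg hx.le, Real.rpow_natCast, Real.rpow_natCast, Real.rpow_natCast]

lemma f18_anti {a b : ℝ} (ha : 0 < a) (hab : a < b) : f18 b < f18 a := by
  have hb0 : (0:ℝ) < b := ha.trans hab
  rw [f18_eq ha, f18_eq hb0]
  gcongr

lemma f18_cont : ContinuousOn f18 (Icc 1 1.0836) := by
  intro x hx
  have hx0 : x ≠ 0 := by
    have : (1:ℝ) ≤ x := hx.1
    linarith
  unfold f18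
  exact (((Real.continuousAt_rpow_const x _ (Or.inl hx0)).add
    (Real.continuousAt_rpow_const x _ (Or.inl hx0))).add
    ((continuousAt_const.mul (Real.continuousAt_rpow_const x _ (Or.inl hx0))))).continuousWithinAt

lemma f18_num : f18 1.0836 < 1 := by
  rw [f18_eq (by norm_num)]
  norm_num

/-- the automatically discovered branching rule for the bottleneck case
improves on the known bound: the unique `γ > 1` with
`γ⁻¹⁰ + γ⁻¹⁶ + 2 γ⁻²⁶ = 1` is strictly less than `1.0836`. -/
theorem stmt_18 :
    ∃ γ : ℝ, (1 < γ ∧ γ ^ (-10 : ℝ) + γ ^ (-16 : ℝ) + 2 * γ ^ (-26 : ℝ) = 1) ∧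
      (∀ γ' : ℝ, 1 < γ' → γ' ^ (-10 : ℝ) + γ' ^ (-16 : ℝ) + 2 * γ' ^ (-26 : ℝ) = 1 →
        γ' = γ) ∧
      γ < 1.0836 := by
  have h1 : f18 1 = 4 := by rw [f18_eq one_pos]; norm_num
  have hmem : (1:ℝ) ∈ Icc (f18 1.0836) (f18 1) := ⟨f18_num.le, by rw [h1]; norm_num⟩
  obtain ⟨γ, hγ, hγ1⟩ := intermediate_value_Icc' (by norm_num : (1:ℝ) ≤ 1.0836) f18_cont hmem
  have hne1 : γ ≠ 1 := by
    intro h; rw [h, h1] at hγ1; norm_num at hγ1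
  have hneb : γ ≠ 1.0836 := by
    intro h; rw [h] at hγ1; exact absurd (hγ1 ▸ f18_num) (lt_irrefl 1)
  have hγlt : 1 < γ := lt_of_le_of_ne hγ.1 (Ne.symm hne1)
  have hγub : γ < 1.0836 := lt_of_le_of_ne hγ.2 hneb
  refine ⟨γ, ⟨hγlt, hγ1⟩, ?_, hγub⟩
  intro γ' hγ' hγ'1
  have h1' : f18 γ' = 1 := hγ'1
  rcases lt_trichotomy γ' γ with h | h | h
  · have := f18_anti (lt_trans one_pos hγ') h
    rw [h1', hγ1] at this; exact absurd this (lt_irrefl 1)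
  · exact h
  · have := f18_anti (lt_trans one_pos hγlt) h
    rw [h1', hγ1] at this; exact absurd this (lt_irrefl 1)
end
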